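/- arXiv:1602.04325 — 2 statements merged into one kernel-verified Lean document; each statement's English description precedes it below -/
import Mathlib

section
/- With φ_ω as the spherical function on Hilbert–Schmidt operators, write φ_ω(ξ) = 1 − ‖ω‖ tr(ξ²) + R(ω, ξ). Then for every fixed Hilbert–Schmidt operator ξ, R(ω, ξ)/‖ω‖ → 0 as ‖ω‖ → 0. Moreover, for every ρ > 0 there exist constants C > 0 and ε > 0 such that ‖ω‖ ≤ ε and ‖ξ‖_{HS} ≤ ρ imply |1 − φ_ω(ξ)| ≤ C‖ω‖. -/
/-- Product of two infinite matrices (entries of operators on ℓ²(ℕ)). -/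
noncomputable def matMul (A B : ℕ → ℕ → ℂ) : ℕ → ℕ → ℂ := fun i j => ∑' k, A i k * B k j

/-- Powers of an infinite matrix. -/
noncomputable def matPow (A : ℕ → ℕ → ℂ) : ℕ → ℕ → ℕ → ℂ
  | 0 => fun i j => if i = j then 1 else 0
  | n + 1 => matMul (matPow A n) A

/-- The Hilbert–Schmidt norm ‖A‖_HS = (∑_{i,j} |A_{ij}|²)^{1/2}. -/
noncomputable def hsNorm (A : ℕ → ℕ → ℂ) : ℝ := Real.sqrt (∑' p : ℕ × ℕ, ‖A p.1 p.2‖ ^ 2)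

/-- The trace of an infinite matrix. -/
noncomputable def traceM (A : ℕ → ℕ → ℂ) : ℂ := ∑' i, A i i

/-- An infinite matrix is Hilbert–Schmidt if its entries are square-summable. -/
def IsHS (A : ℕ → ℕ → ℂ) : Prop := Summable fun p : ℕ × ℕ => ‖A p.1 p.2‖ ^ 2

/-- Fredholm determinant det(1+A) via exp(tr(log(1+A))). -/
noncomputable def det1Add (A : ℕ → ℕ → ℂ) : ℂ :=
  Complex.exp (∑' m : ℕ, ((-1 : ℂ) ^ m / (m + 1)) * traceM (matPow A (m + 1)))

/-- The factor det(1 + α_k ξ²)⁻¹ of the spherical function. -/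
noncomputable def detFactor (a : ℝ) (ξ : ℕ → ℕ → ℂ) : ℂ :=
  (det1Add fun i j => (a : ℂ) * matPow ξ 2 i j)⁻¹

/-- The spherical function φ_ω(ξ) = e^{−γ tr ξ²} ∏_k det(1 + α_k ξ²)⁻¹. -/
noncomputable def sphFun (α : ℕ → ℝ) (γ : ℝ) (ξ : ℕ → ℕ → ℂ) : ℂ :=
  Complex.exp (-(γ : ℂ) * traceM (matPow ξ 2)) * ∏' k, detFactor (α k) ξ

/-- ‖ω‖ = γ + ∑_k α_k. -/
noncomputable def omegaNorm (α : ℕ → ℝ) (γ : ℝ) : ℝ := γ + ∑' k, α k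

/-- The remainder R(ω, ξ) in the expansion φ_ω(ξ) = 1 − ‖ω‖ tr ξ² + R(ω, ξ). -/
noncomputable def remR (α : ℕ → ℝ) (γ : ℝ) (ξ : ℕ → ℕ → ℂ) : ℂ :=
  sphFun α γ ξ - 1 + (omegaNorm α γ : ℂ) * traceM (matPow ξ 2)

/-!
The Hilbert–Schmidt norm is submultiplicative and `‖tr (A B)‖ ≤ ‖A‖_HS ‖B‖_HS`, so the `m`-th
term of the series for `log det(1 + a ξ²)` is bounded by `(a ‖ξ‖²_HS)^(m+1)`. When
`‖ω‖ ‖ξ‖²_HS ≤ 1/2` all these series converge geometrically, and summing over `k` gives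
`φ_ω(ξ) = exp (-(‖ω‖ tr ξ² + H))` with `‖H‖ ≤ 2 (‖ω‖ ‖ξ‖²_HS)²`. Both estimates then follow from
`‖eᶻ - 1‖ ≤ 2 ‖z‖` and `‖eᶻ - 1 - z‖ ≤ ‖z‖²` for `‖z‖ ≤ 1`.
-/

lemma tsum_mul_le_sqrt_mul_sqrt {ι : Type*} {f g : ι → ℝ} (hf0 : ∀ i, 0 ≤ f i)
    (hg0 : ∀ i, 0 ≤ g i) (hf : Summable fun i => f i ^ 2) (hg : Summable fun i => g i ^ 2) :
    Summable (fun i => f i * g i) ∧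
      ∑' i, f i * g i ≤ √(∑' i, f i ^ 2) * √(∑' i, g i ^ 2) := by
  have := Real.summable_and_inner_le_Lp_mul_Lq_tsum_of_nonneg Real.HolderConjugate.two_two hf0 hg0
    (by simpa only [Real.rpow_two] using hf) (by simpa only [Real.rpow_two] using hg)
  simpa only [Real.rpow_two, Real.sqrt_eq_rpow] using this

section HilbertSchmidt

variable {A B : ℕ → ℕ → ℂ}

lemma hsNorm_nonneg (A : ℕ → ℕ → ℂ) : 0 ≤ hsNorm A := Real.sqrt_nonneg _

lemma hsNorm_sq (A : ℕ → ℕ → ℂ) : hsNorm A ^ 2 = ∑' p : ℕ × ℕ, ‖A p.1 p.2‖ ^ 2 :=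
  Real.sq_sqrt (tsum_nonneg fun _ => sq_nonneg _)

lemma IsHS.transpose (hB : IsHS B) : IsHS fun i j => B j i := hB.prod_symm

lemma hsNorm_transpose (B : ℕ → ℕ → ℂ) : hsNorm (fun i j => B j i) = hsNorm B := by
  unfold hsNorm
  congr 1
  exact (Equiv.prodComm ℕ ℕ).tsum_eq fun p => ‖B p.1 p.2‖ ^ 2

lemma IsHS.tsum_tsum_eq (hA : IsHS A) :
    ∑' i, ∑' k, ‖A i k‖ ^ 2 = hsNorm A ^ 2 := by
  rw [hsNorm_sq, hA.tsum_prod]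

lemma norm_matMul_le (hA : IsHS A) (hB : IsHS B) (i j : ℕ) :
    ‖matMul A B i j‖ ≤ √(∑' k, ‖A i k‖ ^ 2) * √(∑' k, ‖B k j‖ ^ 2) := by
  obtain ⟨hsum, hle⟩ := tsum_mul_le_sqrt_mul_sqrt (fun k => norm_nonneg (A i k))
    (fun k => norm_nonneg (B k j)) (hA.prod_factor i) (hB.transpose.prod_factor j)
  refine (norm_tsum_le_tsum_norm ?_).trans ?_
  · simpa only [norm_mul] using hsum
  · simpa only [norm_mul] using hle

lemma norm_matMul_sq_le (hA : IsHS A) (hB : IsHS B) (i j : ℕ) :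
    ‖matMul A B i j‖ ^ 2 ≤ (∑' k, ‖A i k‖ ^ 2) * ∑' k, ‖B k j‖ ^ 2 := by
  have h := pow_le_pow_left₀ (norm_nonneg _) (norm_matMul_le hA hB i j) 2
  rwa [mul_pow, Real.sq_sqrt (tsum_nonneg fun _ => sq_nonneg _),
    Real.sq_sqrt (tsum_nonneg fun _ => sq_nonneg _)] at h

lemma IsHS.hasSum_rowSq_mul_colSq (hA : IsHS A) (hB : IsHS B) :
    HasSum (fun p : ℕ × ℕ => (∑' k, ‖A p.1 k‖ ^ 2) * ∑' k, ‖B k p.2‖ ^ 2)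
      (hsNorm A ^ 2 * hsNorm B ^ 2) := by
  have hrow : HasSum (fun i => ∑' k, ‖A i k‖ ^ 2) (hsNorm A ^ 2) := by
    rw [← hA.tsum_tsum_eq]; exact hA.prod.hasSum
  have hcol : HasSum (fun j => ∑' k, ‖B k j‖ ^ 2) (hsNorm B ^ 2) := by
    rw [← hsNorm_transpose B, ← hB.transpose.tsum_tsum_eq]; exact hB.transpose.prod.hasSum
  exact hrow.mul hcol (hrow.summable.mul_of_nonneg hcol.summable
    (fun _ => tsum_nonneg fun _ => sq_nonneg _) (fun _ => tsum_nonneg fun _ => sq_nonneg _))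

lemma IsHS.matMul (hA : IsHS A) (hB : IsHS B) : IsHS (matMul A B) :=
  .of_nonneg_of_le (fun _ => sq_nonneg _) (fun p => norm_matMul_sq_le hA hB p.1 p.2)
    (hA.hasSum_rowSq_mul_colSq hB).summable

lemma hsNorm_matMul_le (hA : IsHS A) (hB : IsHS B) :
    hsNorm (matMul A B) ≤ hsNorm A * hsNorm B := by
  rw [← Real.sqrt_sq (mul_nonneg (hsNorm_nonneg A) (hsNorm_nonneg B)), mul_pow,
    ← (hA.hasSum_rowSq_mul_colSq hB).tsum_eq]
  exact Real.sqrt_le_sqrt (Summable.tsum_le_tsum (fun p => norm_matMul_sq_le hA hB p.1 p.2)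
    (hA.matMul hB) (hA.hasSum_rowSq_mul_colSq hB).summable)

lemma norm_traceM_matMul_le (hA : IsHS A) (hB : IsHS B) :
    ‖traceM (matMul A B)‖ ≤ hsNorm A * hsNorm B := by
  obtain ⟨hF, hFle⟩ := tsum_mul_le_sqrt_mul_sqrt (fun p : ℕ × ℕ => norm_nonneg (A p.1 p.2))
    (fun p => norm_nonneg (B p.2 p.1)) hA hB.transpose
  have hdiag : ∀ i, ‖matMul A B i i‖ ≤ ∑' k, ‖A i k‖ * ‖B k i‖ := fun i => by
    simpa only [matMul, norm_mul] using
      norm_tsum_le_tsum_norm (f := fun k => A i k * B k i)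
        (by simpa only [norm_mul] using hF.prod_factor i)
  have hdiag_sum : Summable fun i => ‖matMul A B i i‖ :=
    .of_nonneg_of_le (fun _ => norm_nonneg _) hdiag hF.prod
  calc ‖traceM (matMul A B)‖ ≤ ∑' i, ‖matMul A B i i‖ := norm_tsum_le_tsum_norm hdiag_sum
    _ ≤ ∑' i, ∑' k, ‖A i k‖ * ‖B k i‖ := Summable.tsum_le_tsum hdiag hdiag_sum hF.prod
    _ = ∑' p : ℕ × ℕ, ‖A p.1 p.2‖ * ‖B p.2 p.1‖ := hF.tsum_prod.symm
    _ ≤ hsNorm A * hsNorm B := by rwa [← hsNorm_transpose B] 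

end HilbertSchmidt

section Powers

variable {A : ℕ → ℕ → ℂ}

@[simp]
lemma matPow_one (A : ℕ → ℕ → ℂ) : matPow A 1 = A := by
  funext i j
  change ∑' k, (if i = k then (1 : ℂ) else 0) * A k j = A i j
  rw [tsum_eq_single i fun k hk => by simp [Ne.symm hk]]
  simp

lemma IsHS.matPow_succ (hA : IsHS A) (n : ℕ) : IsHS (matPow A (n + 1)) := by
  induction n with
  | zero => simpa using hA
  | succ n ih => exact ih.matMul hA

lemma hsNorm_matPow_succ_le (hA : IsHS A) (n : ℕ) :
    hsNorm (matPow A (n + 1)) ≤ hsNorm A ^ (n + 1) := by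
  induction n with
  | zero => simp
  | succ n ih =>
    calc hsNorm (matPow A (n + 2)) ≤ hsNorm (matPow A (n + 1)) * hsNorm A :=
          hsNorm_matMul_le (hA.matPow_succ n) hA
      _ ≤ hsNorm A ^ (n + 1) * hsNorm A := by gcongr; exact hsNorm_nonneg A
      _ = hsNorm A ^ (n + 2) := by ring

lemma norm_traceM_matPow_le (hA : IsHS A) (n : ℕ) :
    ‖traceM (matPow A (n + 2))‖ ≤ hsNorm A ^ (n + 2) :=
  calc ‖traceM (matMul (matPow A (n + 1)) A)‖ ≤ hsNorm (matPow A (n + 1)) * hsNorm A :=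
        norm_traceM_matMul_le (hA.matPow_succ n) hA
    _ ≤ hsNorm A ^ (n + 1) * hsNorm A := by
        gcongr; exacts [hsNorm_nonneg A, hsNorm_matPow_succ_le hA n]
    _ = hsNorm A ^ (n + 2) := by ring

lemma norm_traceM_matPow_matPow_two_le (hA : IsHS A) (m : ℕ) :
    ‖traceM (matPow (matPow A 2) (m + 1))‖ ≤ (hsNorm A ^ 2) ^ (m + 1) := by
  cases m with
  | zero => simpa using norm_traceM_matPow_le hA 0
  | succ m =>
    calc ‖traceM (matPow (matPow A 2) (m + 2))‖ ≤ hsNorm (matPow A 2) ^ (m + 2) :=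
          norm_traceM_matPow_le (hA.matPow_succ 1) m
      _ ≤ (hsNorm A ^ 2) ^ (m + 2) := by
          gcongr; exacts [hsNorm_nonneg _, hsNorm_matPow_succ_le hA 1]

lemma matPow_const_mul (c : ℂ) (A : ℕ → ℕ → ℂ) (n : ℕ) :
    matPow (fun i j => c * A i j) n = fun i j => c ^ n * matPow A n i j := by
  induction n with
  | zero => funext i j; simp [matPow]
  | succ n ih =>
    funext i j
    change ∑' k, matPow (fun i j => c * A i j) n i k * (c * A k j) = _
    simp_rw [ih, show ∀ k, c ^ n * matPow A n i k * (c * A k j)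
      = c ^ (n + 1) * (matPow A n i k * A k j) from fun k => by ring]
    exact tsum_mul_left

lemma traceM_const_mul (c : ℂ) (A : ℕ → ℕ → ℂ) :
    traceM (fun i j => c * A i j) = c * traceM A :=
  tsum_mul_left

end Powers

lemma norm_tsum_sub_zero_le_of_norm_le_pow {E : Type*} [NormedAddCommGroup E] [CompleteSpace E]
    {x : ℕ → E} {r : ℝ} (hr0 : 0 ≤ r) (hr : r ≤ 1 / 2) (hx : ∀ m, ‖x m‖ ≤ r ^ (m + 1)) :
    ‖∑' m, x m - x 0‖ ≤ 2 * r ^ 2 := by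
  have hgeom : HasSum (fun m => r ^ 2 * r ^ m) (r ^ 2 * (1 - r)⁻¹) :=
    (hasSum_geometric_of_lt_one hr0 (by linarith)).mul_left _
  have hx_sum : Summable x := .of_norm_bounded
    ((summable_geometric_of_lt_one hr0 (by linarith)).mul_left r)
    fun m => (hx m).trans_eq (pow_succ' r m)
  rw [hx_sum.tsum_eq_zero_add, add_sub_cancel_left]
  calc ‖∑' m, x (m + 1)‖ ≤ r ^ 2 * (1 - r)⁻¹ :=
        tsum_of_norm_bounded hgeom fun m => (hx (m + 1)).trans_eq (by ring)
    _ ≤ r ^ 2 * 2 := by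
        gcongr
        rw [inv_le_comm₀ (by linarith) two_pos]
        linarith
    _ = 2 * r ^ 2 := mul_comm _ _

noncomputable def logDetTerm (a : ℝ) (ξ : ℕ → ℕ → ℂ) (m : ℕ) : ℂ :=
  (-1) ^ m / (m + 1) * ((a : ℂ) ^ (m + 1) * traceM (matPow (matPow ξ 2) (m + 1)))

lemma detFactor_eq_exp_neg_tsum (a : ℝ) (ξ : ℕ → ℕ → ℂ) :
    detFactor a ξ = Complex.exp (-∑' m, logDetTerm a ξ m) := by
  simp only [detFactor, det1Add, logDetTerm, matPow_const_mul, traceM_const_mul, Complex.exp_neg]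

lemma logDetTerm_zero (a : ℝ) (ξ : ℕ → ℕ → ℂ) :
    logDetTerm a ξ 0 = a * traceM (matPow ξ 2) := by
  simp [logDetTerm]

lemma norm_logDetTerm_le {ξ : ℕ → ℕ → ℂ} (hξ : IsHS ξ) {a : ℝ} (ha : 0 ≤ a) (m : ℕ) :
    ‖logDetTerm a ξ m‖ ≤ (a * hsNorm ξ ^ 2) ^ (m + 1) := by
  have hcoeff : ‖(-1 : ℂ) ^ m / (m + 1)‖ ≤ 1 := by
    rw [norm_div, norm_pow, norm_neg, norm_one, one_pow]
    exact div_le_one_of_le₀ (by norm_cast; simp) (norm_nonneg _)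
  calc ‖logDetTerm a ξ m‖
      = ‖(-1 : ℂ) ^ m / (m + 1)‖ * (a ^ (m + 1) * ‖traceM (matPow (matPow ξ 2) (m + 1))‖) := by
        rw [logDetTerm, norm_mul, norm_mul, norm_pow, Complex.norm_real, Real.norm_of_nonneg ha]
    _ ≤ 1 * (a ^ (m + 1) * (hsNorm ξ ^ 2) ^ (m + 1)) := by
        gcongr; exact norm_traceM_matPow_matPow_two_le hξ m
    _ = (a * hsNorm ξ ^ 2) ^ (m + 1) := by ring

lemma exists_detFactor_eq_exp {ξ : ℕ → ℕ → ℂ} (hξ : IsHS ξ) {a : ℝ} (ha : 0 ≤ a)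
    (haξ : a * hsNorm ξ ^ 2 ≤ 1 / 2) :
    ∃ h : ℂ, detFactor a ξ = Complex.exp (-(a * traceM (matPow ξ 2) + h)) ∧
      ‖h‖ ≤ 2 * (a * hsNorm ξ ^ 2) ^ 2 :=
  ⟨∑' m, logDetTerm a ξ m - logDetTerm a ξ 0,
    by rw [detFactor_eq_exp_neg_tsum, logDetTerm_zero, add_sub_cancel],
    norm_tsum_sub_zero_le_of_norm_le_pow (by positivity) haξ (norm_logDetTerm_le hξ ha)⟩

section Spherical

variable {α : ℕ → ℝ} {γ : ℝ} {ξ : ℕ → ℕ → ℂ}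

lemma omegaNorm_nonneg (hα : ∀ k, 0 ≤ α k) (hγ : 0 ≤ γ) : 0 ≤ omegaNorm α γ :=
  add_nonneg hγ (tsum_nonneg hα)

lemma le_omegaNorm (hα : ∀ k, 0 ≤ α k) (hsum : Summable α) (hγ : 0 ≤ γ) (k : ℕ) :
    α k ≤ omegaNorm α γ :=
  (hsum.le_tsum k fun j _ => hα j).trans (le_add_of_nonneg_left hγ)

lemma exists_sphFun_eq_exp (hξ : IsHS ξ) (hα : ∀ k, 0 ≤ α k) (hsum : Summable α) (hγ : 0 ≤ γ)
    (hω : omegaNorm α γ * hsNorm ξ ^ 2 ≤ 1 / 2) :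
    ∃ H : ℂ, sphFun α γ ξ = Complex.exp (-(omegaNorm α γ * traceM (matPow ξ 2) + H)) ∧
      ‖H‖ ≤ 2 * (omegaNorm α γ * hsNorm ξ ^ 2) ^ 2 ∧
      ‖omegaNorm α γ * traceM (matPow ξ 2) + H‖ ≤ 2 * (omegaNorm α γ * hsNorm ξ ^ 2) := by
  set ω := omegaNorm α γ with hω_def
  set s := hsNorm ξ ^ 2
  have hω0 : 0 ≤ ω := omegaNorm_nonneg hα hγ
  have hs0 : 0 ≤ s := sq_nonneg _
  have hαk : ∀ k, α k * s ≤ 1 / 2 := fun k =>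
    (mul_le_mul_of_nonneg_right (le_omegaNorm hα hsum hγ k) hs0).trans hω
  choose h hdet hh using fun k => exists_detFactor_eq_exp hξ (hα k) (hαk k)
  have hh_le : ∀ k, ‖h k‖ ≤ 2 * s ^ 2 * ω * α k := fun k =>
    calc ‖h k‖ ≤ 2 * s ^ 2 * α k * α k := (hh k).trans_eq (by ring)
      _ ≤ 2 * s ^ 2 * α k * ω := by
          gcongr
          exacts [mul_nonneg (by positivity) (hα k), le_omegaNorm hα hsum hγ k]
      _ = 2 * s ^ 2 * ω * α k := by ring
  have hH : ‖∑' k, h k‖ ≤ 2 * (ω * s) ^ 2 :=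
    calc ‖∑' k, h k‖ ≤ 2 * s ^ 2 * ω * ∑' k, α k :=
          tsum_of_norm_bounded (hsum.hasSum.mul_left _) hh_le
      _ ≤ 2 * s ^ 2 * ω * ω := by
          gcongr; exact le_add_of_nonneg_left hγ
      _ = 2 * (ω * s) ^ 2 := by ring
  have hexponent : HasProd (fun k => Complex.exp (-(α k * traceM (matPow ξ 2) + h k)))
      (Complex.exp (-((∑' k, α k : ℝ) * traceM (matPow ξ 2) + ∑' k, h k))) :=
    (((Complex.hasSum_ofReal.mpr hsum.hasSum).mul_right _).add
      (Summable.of_norm_bounded (hsum.mul_left _) hh_le).hasSum).neg.cexp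
  have ht : ‖(ω : ℂ) * traceM (matPow ξ 2)‖ ≤ ω * s := by
    rw [norm_mul, Complex.norm_real, Real.norm_of_nonneg hω0]
    gcongr; exact norm_traceM_matPow_le hξ 0
  refine ⟨∑' k, h k, ?_, hH, ?_⟩
  · rw [sphFun, tprod_congr hdet, hexponent.tprod_eq, ← Complex.exp_add, hω_def, omegaNorm]
    push_cast
    ring_nf
  · calc ‖(ω : ℂ) * traceM (matPow ξ 2) + ∑' k, h k‖ ≤ ω * s + 2 * (ω * s) ^ 2 :=
          norm_add_le_of_le ht hH
      _ ≤ 2 * (ω * s) := by nlinarith [mul_nonneg hω0 hs0]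

lemma norm_remR_le (hξ : IsHS ξ) (hα : ∀ k, 0 ≤ α k) (hsum : Summable α) (hγ : 0 ≤ γ)
    (hω : omegaNorm α γ * hsNorm ξ ^ 2 ≤ 1 / 2) :
    ‖remR α γ ξ‖ ≤ 6 * (omegaNorm α γ * hsNorm ξ ^ 2) ^ 2 := by
  obtain ⟨H, hsph, hH, hz⟩ := exists_sphFun_eq_exp hξ hα hsum hγ hω
  set z := (omegaNorm α γ : ℂ) * traceM (matPow ξ 2) + H with hz_def
  have hexp : ‖Complex.exp (-z) - 1 - -z‖ ≤ ‖z‖ ^ 2 := by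
    simpa only [norm_neg] using Complex.norm_exp_sub_one_sub_id_le (x := -z)
      (by rw [norm_neg]; linarith)
  calc ‖remR α γ ξ‖ = ‖(Complex.exp (-z) - 1 - -z) - H‖ := by
        rw [remR, hsph, hz_def]; ring_nf
    _ ≤ ‖z‖ ^ 2 + ‖H‖ := norm_sub_le_of_le hexp le_rfl
    _ ≤ (2 * (omegaNorm α γ * hsNorm ξ ^ 2)) ^ 2 + 2 * (omegaNorm α γ * hsNorm ξ ^ 2) ^ 2 := by
        gcongr
    _ = 6 * (omegaNorm α γ * hsNorm ξ ^ 2) ^ 2 := by ring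

lemma norm_one_sub_sphFun_le (hξ : IsHS ξ) (hα : ∀ k, 0 ≤ α k) (hsum : Summable α) (hγ : 0 ≤ γ)
    (hω : omegaNorm α γ * hsNorm ξ ^ 2 ≤ 1 / 2) :
    ‖1 - sphFun α γ ξ‖ ≤ 4 * (omegaNorm α γ * hsNorm ξ ^ 2) := by
  obtain ⟨H, hsph, -, hz⟩ := exists_sphFun_eq_exp hξ hα hsum hγ hω
  set z := (omegaNorm α γ : ℂ) * traceM (matPow ξ 2) + H
  calc ‖1 - sphFun α γ ξ‖ = ‖Complex.exp (-z) - 1‖ := by rw [hsph, norm_sub_rev]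
    _ ≤ 2 * ‖-z‖ := Complex.norm_exp_sub_one_le (by rw [norm_neg]; linarith)
    _ ≤ 4 * (omegaNorm α γ * hsNorm ξ ^ 2) := by rw [norm_neg]; linarith

end Spherical

/-- Writing φ_ω(ξ) = 1 − ‖ω‖ tr ξ² + R(ω, ξ): for fixed ξ, R(ω,ξ)/‖ω‖ → 0 as ‖ω‖ → 0;
    and for every ρ > 0 there are C > 0 and ε > 0 such that ‖ω‖ ≤ ε and ‖ξ‖_HS ≤ ρ
    imply |1 − φ_ω(ξ)| ≤ C‖ω‖. -/
theorem sphFun_first_order_expansion :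
    (∀ ξ : ℕ → ℕ → ℂ, IsHS ξ → ∀ ε > (0 : ℝ), ∃ δ > (0 : ℝ),
      ∀ (α : ℕ → ℝ) (γ : ℝ), (∀ k, 0 ≤ α k) → Summable α → 0 ≤ γ →
        0 < omegaNorm α γ → omegaNorm α γ ≤ δ →
          ‖remR α γ ξ‖ ≤ ε * omegaNorm α γ) ∧
    (∀ ρ > (0 : ℝ), ∃ C > (0 : ℝ), ∃ ε > (0 : ℝ),
      ∀ (α : ℕ → ℝ) (γ : ℝ), (∀ k, 0 ≤ α k) → Summable α → 0 ≤ γ →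
        omegaNorm α γ ≤ ε →
        ∀ ξ : ℕ → ℕ → ℂ, IsHS ξ → hsNorm ξ ≤ ρ →
          ‖1 - sphFun α γ ξ‖ ≤ C * omegaNorm α γ) := by
  constructor
  · intro ξ hξ ε hε
    set s := hsNorm ξ ^ 2
    have hs0 : 0 ≤ s := sq_nonneg _
    refine ⟨min (1 / (2 * s + 1)) (ε / (6 * s ^ 2 + 1)), by positivity, ?_⟩
    intro α γ hα hsum hγ hω0 hωδ
    have hω1 := (le_div_iff₀ (by positivity)).mp (hωδ.trans (min_le_left _ _))
    have hω2 := (le_div_iff₀ (by positivity)).mp (hωδ.trans (min_le_right _ _))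
    calc ‖remR α γ ξ‖ ≤ 6 * (omegaNorm α γ * s) ^ 2 :=
          norm_remR_le hξ hα hsum hγ (by nlinarith)
      _ = (6 * s ^ 2 * omegaNorm α γ) * omegaNorm α γ := by ring
      _ ≤ ε * omegaNorm α γ := by gcongr; nlinarith
  · intro ρ hρ
    refine ⟨4 * ρ ^ 2, by positivity, 1 / (2 * ρ ^ 2), by positivity, ?_⟩
    intro α γ hα hsum hγ hωε ξ hξ hξρ
    have hω0 := omegaNorm_nonneg hα hγ
    have hs : omegaNorm α γ * hsNorm ξ ^ 2 ≤ omegaNorm α γ * ρ ^ 2 := by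
      gcongr; exact hsNorm_nonneg ξ
    have hωρ : omegaNorm α γ * ρ ^ 2 ≤ 1 / 2 := by
      have := (le_div_iff₀ (by positivity)).mp hωε
      linarith
    calc ‖1 - sphFun α γ ξ‖ ≤ 4 * (omegaNorm α γ * hsNorm ξ ^ 2) :=
          norm_one_sub_sphFun_le hξ hα hsum hγ (hs.trans hωρ)
      _ ≤ 4 * ρ ^ 2 * omegaNorm α γ := by linarith
end

section
/- If ψ : V → ℂ is a function of negative type on a real vector space V, then for every t ≥ 0 the function e^{−tψ} is of positive type; conversely, if ψ(0) ≥ 0 and e^{−tψ} is of positive type for all t ≥ 0, then ψ is of negative type (Schoenberg's theorem). -/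
open scoped ComplexConjugate ComplexOrder

/-- A function φ : V → ℂ on a real vector space is of positive type if
    ∑_{i,j} c_i conj(c_j) φ(ξ_i − ξ_j) ≥ 0 for all finite families. -/
def IsPosType {V : Type*} [AddCommGroup V] [Module ℝ V] (φ : V → ℂ) : Prop :=
  ∀ (N : ℕ) (ξ : Fin N → V) (c : Fin N → ℂ),
    0 ≤ ∑ i, ∑ j, c i * conj (c j) * φ (ξ i - ξ j)

/-- A function ψ : V → ℂ on a real vector space is of negative type if ψ(0) ≥ 0,
    ψ(−ξ) = conj(ψ(ξ)), and ∑_{i,j} c_i conj(c_j) ψ(ξ_i − ξ_j) ≤ 0 whenever ∑ c_i = 0. -/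
def IsNegType {V : Type*} [AddCommGroup V] [Module ℝ V] (ψ : V → ℂ) : Prop :=
  0 ≤ ψ 0 ∧ (∀ ξ, ψ (-ξ) = conj (ψ ξ)) ∧
    ∀ (N : ℕ) (ξ : Fin N → V) (c : Fin N → ℂ), (∑ i, c i) = 0 →
      (∑ i, ∑ j, c i * conj (c j) * ψ (ξ i - ξ j)) ≤ 0

/-! If ψ is of negative type, the kernel `K(ξ, η) = ψ(ξ) + conj ψ(η) - ψ(ξ - η) - ψ(0)` is positive
semidefinite: its form with weights `cᵢ` is minus the negative-type form after adjoining the point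
`0` with weight `-∑ cᵢ`. By the Schur product theorem, entrywise powers and hence the entrywise
exponential of a positive semidefinite matrix are positive semidefinite, and `e^{-tψ}` is, up to a
diagonal congruence and a positive factor, the entrywise exponential of `tK`.

Conversely, `ψ` is the limit as `t → 0⁺` of `(1 - e^{-tψ}) / t`. For weights summing to `0`, the
form of this quotient is `-1/t` times the form of `e^{-tψ}`, hence `≤ 0`, and the Hermitian
symmetry of the positive-type functions `e^{-tψ}` passes to the limit as well. -/

open Filter Topology

namespace Matrix

variable {n : Type*} [Fintype n]

theorem sum_sum_mul_conj_mul_eq_dotProduct (A : Matrix n n ℂ) (c : n → ℂ) :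
    ∑ i, ∑ j, c i * conj (c j) * A i j = star (star c) ⬝ᵥ (A *ᵥ star c) := by
  simp [dotProduct, mulVec, Finset.mul_sum, mul_comm, mul_left_comm]

theorem posSemidef_iff_forall_sum_nonneg {A : Matrix n n ℂ} :
    A.PosSemidef ↔ ∀ c : n → ℂ, 0 ≤ ∑ i, ∑ j, c i * conj (c j) * A i j := by
  classical
  simp_rw [sum_sum_mul_conj_mul_eq_dotProduct]
  refine ⟨fun hA c => hA.dotProduct_mulVec_nonneg _, fun h => ?_⟩
  replace h : ∀ x, 0 ≤ star x ⬝ᵥ (A *ᵥ x) := fun x => by simpa using h (star x)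
  refine PosSemidef.of_dotProduct_mulVec_nonneg ?_ h
  rw [← isSymmetric_toEuclideanLin_iff, LinearMap.isSymmetric_iff_inner_map_self_real]
  intro v
  rw [EuclideanSpace.inner_eq_star_dotProduct, ofLp_toLpLin, toLin'_apply, dotProduct_star,
    Complex.conj_eq_iff_im, Complex.star_def, Complex.conj_im, neg_eq_zero, dotProduct_comm]
  exact (Complex.le_def.mp (h v.ofLp)).2.symm

theorem PosSemidef.map_pow {𝕜 : Type*} [RCLike 𝕜] {A : Matrix n n 𝕜} (hA : A.PosSemidef) (k : ℕ) :
    (A.map (· ^ k)).PosSemidef := by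
  induction k with
  | zero =>
    convert posSemidef_vecMulVec_self_star (1 : n → 𝕜) using 1
    ext i j
    simp [vecMulVec]
  | succ k ih =>
    convert ih.hadamard hA using 1
    ext i j
    simp [pow_succ]

theorem PosSemidef.map_exp {A : Matrix n n ℂ} (hA : A.PosSemidef) :
    (A.map Complex.exp).PosSemidef := by
  rw [posSemidef_iff_forall_sum_nonneg]
  intro c
  have hterm : ∀ i j, HasSum (fun k : ℕ => (k.factorial : ℂ)⁻¹ * (c i * conj (c j) * A i j ^ k))
      (c i * conj (c j) * Complex.exp (A i j)) := fun i j => by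
    simp_rw [mul_left_comm _ (c i * _), ← div_eq_inv_mul]
    exact (Complex.exp_eq_exp_ℂ ▸ NormedSpace.expSeries_div_hasSum_exp (A i j)).mul_left _
  refine (hasSum_sum fun i _ => hasSum_sum fun j _ => hterm i j).nonneg fun k => ?_
  simp only [← Finset.mul_sum]
  refine mul_nonneg ?_ (posSemidef_iff_forall_sum_nonneg.mp (hA.map_pow k) c)
  positivity

end Matrix

section NegativeType

variable {V : Type*} [AddCommGroup V] [Module ℝ V]

theorem IsNegType.posSemidef_kernel {ψ : V → ℂ} (hψ : IsNegType ψ) {N : ℕ} (ξ : Fin N → V) :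
    (Matrix.of fun i j => ψ (ξ i) + conj (ψ (ξ j)) - ψ (ξ i - ξ j) - ψ 0).PosSemidef := by
  obtain ⟨-, hneg, hcond⟩ := hψ
  refine Matrix.posSemidef_iff_forall_sum_nonneg.mpr fun c => ?_
  obtain ⟨s, hs⟩ : ∃ s, ∑ i, c i = s := ⟨_, rfl⟩
  have hext := hcond (N + 1) (Fin.cons 0 ξ) (Fin.cons (-s) c) (by simp [Fin.sum_univ_succ, hs])
  simp only [Fin.sum_univ_succ, Fin.cons_zero, Fin.cons_succ, sub_zero, zero_sub,
    hneg] at hext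
  simp only [Matrix.of_apply, mul_add, mul_sub, Finset.sum_add_distrib, Finset.sum_sub_distrib,
    mul_assoc, ← Finset.mul_sum, ← Finset.sum_mul, map_neg, ← map_sum, hs, neg_mul,
    mul_neg, Finset.sum_neg_distrib, mul_left_comm (c _) (conj s)] at hext ⊢
  exact le_of_le_of_eq (neg_nonneg.mpr hext) (by ring)

theorem isPosType_iff_posSemidef {φ : V → ℂ} :
    IsPosType φ ↔ ∀ N (ξ : Fin N → V), (Matrix.of fun i j => φ (ξ i - ξ j)).PosSemidef := by
  simp only [IsPosType, Matrix.posSemidef_iff_forall_sum_nonneg, Matrix.of_apply]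

theorem IsNegType.isPosType_exp {ψ : V → ℂ} (hψ : IsNegType ψ) {t : ℝ} (ht : 0 ≤ t) :
    IsPosType fun ξ => Complex.exp (-(t : ℂ) * ψ ξ) := by
  rw [isPosType_iff_posSemidef]
  intro N ξ
  have hE := ((hψ.posSemidef_kernel ξ).smul ht).map_exp
  have hD := hE.mul_mul_conjTranspose_same (Matrix.diagonal fun i => Complex.exp (-t * ψ (ξ i)))
  have hψ0 : ψ 0 = (ψ 0).re := Complex.eq_re_of_ofReal_le (r := 0) (by simpa using hψ.1)
  -- e^{-tψ(ξᵢ - ξⱼ)} = e^{tψ(0)} dᵢ e^{t Kᵢⱼ} conj dⱼ with dᵢ = e^{-tψ(ξᵢ)}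
  convert hD.smul (Real.exp_pos (t * (ψ 0).re)).le using 1
  ext i j
  simp only [Matrix.of_apply, Matrix.smul_apply, Matrix.diagonal_mul, Matrix.mul_diagonal,
    Matrix.diagonal_conjTranspose, Matrix.map_apply, Pi.star_apply, Complex.star_def,
    ← Complex.exp_conj, Complex.real_smul, Complex.ofReal_exp, ← Complex.exp_add]
  congr 1
  rw [map_mul, map_neg, Complex.conj_ofReal, Complex.ofReal_mul, ← hψ0]
  ring

theorem IsPosType.apply_neg {φ : V → ℂ} (hφ : IsPosType φ) (ξ : V) : φ (-ξ) = conj (φ ξ) := by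
  simpa using ((isPosType_iff_posSemidef.mp hφ 2 ![0, ξ]).isHermitian.apply 0 1).symm

theorem IsPosType.sum_mul_one_sub_nonpos {φ : V → ℂ} (hφ : IsPosType φ) {a : ℂ} (ha : 0 ≤ a)
    {N : ℕ} (ξ : Fin N → V) {c : Fin N → ℂ} (hc : ∑ i, c i = 0) :
    ∑ i, ∑ j, c i * conj (c j) * (a * (1 - φ (ξ i - ξ j))) ≤ 0 := by
  have hcc : ∑ i, ∑ j, c i * conj (c j) = 0 := by rw [← Finset.sum_mul_sum, hc, zero_mul]
  have key : ∑ i, ∑ j, c i * conj (c j) * (a * (1 - φ (ξ i - ξ j)))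
      = a * (∑ i, ∑ j, c i * conj (c j) - ∑ i, ∑ j, c i * conj (c j) * φ (ξ i - ξ j)) := by
    simp only [Finset.mul_sum, ← Finset.sum_sub_distrib]
    exact Finset.sum_congr rfl fun i _ => Finset.sum_congr rfl fun j _ => by ring
  rw [key, hcc, zero_sub, mul_neg]
  exact neg_nonpos.mpr (mul_nonneg ha (hφ N ξ c))

theorem tendsto_inv_mul_one_sub_exp (z : ℂ) :
    Tendsto (fun t : ℝ => (t : ℂ)⁻¹ * (1 - Complex.exp (-(t : ℂ) * z))) (𝓝[>] 0) (𝓝 z) := by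
  have hderiv : HasDerivAt (fun t : ℝ => Complex.exp (-(t : ℂ) * z)) (-z) 0 := by
    simpa using ((Complex.ofRealCLM.hasDerivAt (x := (0 : ℝ))).neg.mul_const z).cexp
  refine ((hasDerivAt_iff_tendsto_slope.mp hderiv).neg.mono_left (nhdsGT_le_nhdsNE 0)).congr
    (fun t => ?_) |>.trans (by rw [neg_neg])
  simp [slope_def_module, Complex.real_smul]
  ring

theorem isNegType_of_isPosType_exp {ψ : V → ℂ} (h0 : 0 ≤ ψ 0)
    (hexp : ∀ t : ℝ, 0 ≤ t → IsPosType fun ξ => Complex.exp (-(t : ℂ) * ψ ξ)) :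
    IsNegType ψ := by
  have happrox (ξ : V) := tendsto_inv_mul_one_sub_exp (ψ ξ)
  refine ⟨h0, fun ξ => ?_, fun N ξ c hc => ?_⟩
  · refine tendsto_nhds_unique (happrox (-ξ)) ?_
    refine ((Complex.continuous_conj.tendsto _).comp (happrox ξ)).congr' ?_
    filter_upwards [self_mem_nhdsWithin] with t ht
    have hneg := (hexp t (le_of_lt ht)).apply_neg ξ
    simp only [Function.comp_apply, hneg, map_mul, map_sub, map_one, map_inv₀, Complex.conj_ofReal]
  · refine le_of_tendsto (tendsto_finsetSum _ fun i _ => tendsto_finsetSum _ fun j _ =>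
      (happrox (ξ i - ξ j)).const_mul (c i * conj (c j))) ?_
    filter_upwards [self_mem_nhdsWithin] with t ht
    have ht' : (0 : ℂ) ≤ (t : ℂ)⁻¹ := inv_nonneg.mpr (Complex.zero_le_real.mpr (le_of_lt ht))
    exact (hexp t (le_of_lt ht)).sum_mul_one_sub_nonpos ht' ξ hc

end NegativeType

/-- Schoenberg's theorem: ψ is of negative type iff ψ(0) ≥ 0 and e^{−tψ} is of
    positive type for every t ≥ 0. -/
theorem schoenberg {V : Type*} [AddCommGroup V] [Module ℝ V] (ψ : V → ℂ) :
    IsNegType ψ ↔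
      (0 ≤ ψ 0 ∧ ∀ t : ℝ, 0 ≤ t → IsPosType (fun ξ => Complex.exp (-(t : ℂ) * ψ ξ))) :=
  ⟨fun hψ => ⟨hψ.1, fun _ ht => hψ.isPosType_exp ht⟩,
    fun ⟨h0, hexp⟩ => isNegType_of_isPosType_exp h0 hexp⟩
end
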